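/- arXiv:quant-ph/0206088 — 2 statements merged into one kernel-verified Lean document; each statement's English description precedes it below -/
import Mathlib

section
/- The squared overlap between Alice's honest state ψ₀ and her cheating state ψ̃₀ equals 3/4: |⟨ψ₀, ψ̃₀⟩|² = 3/4. Consequently, if Alice prepares ψ̃₀ instead of ψ₀, Bob's projective measurement onto ψ₀ accepts with probability exactly 3/4. -/
noncomputable section

/-- The standard orthonormal basis vector `e_{(i,j)}` of `ℂ³ ⊗ ℂ³`,
modelled as `EuclideanSpace ℂ (Fin 3 × Fin 3)`. -/
def e (p : Fin 3 × Fin 3) : EuclideanSpace ℂ (Fin 3 × Fin 3) :=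
  EuclideanSpace.single p 1

/-- The honest state `ψ₀ = (1/√2)(e_{(0,0)} + e_{(1,2)})`. -/
def ψ₀ : EuclideanSpace ℂ (Fin 3 × Fin 3) :=
  (1 / (Real.sqrt 2 : ℂ)) • (e (0, 0) + e (1, 2))

/-- Alice's cheating state `ψ̃₀ = (1/√6)(e_{(0,0)} + e_{(0,1)} + 2 e_{(1,2)})`. -/
def ψt₀ : EuclideanSpace ℂ (Fin 3 × Fin 3) :=
  (1 / (Real.sqrt 6 : ℂ)) • (e (0, 0) + e (0, 1) + (2 : ℂ) • e (1, 2))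

/-! Only `e (0, 0)` and `e (1, 2)` are shared by the two unnormalized vectors, so their inner
product is `1 + 2 = 3`; the normalizations contribute `1 / (2 · 6)`, giving `9 / 12 = 3 / 4`. -/

open RCLike in
theorem norm_inner_one_div_sqrt_smul_sq {𝕜 E : Type*} [RCLike 𝕜] [SeminormedAddCommGroup E]
    [InnerProductSpace 𝕜 E] {r s : ℝ} (hr : 0 ≤ r) (hs : 0 ≤ s) (v w : E) :
    ‖(inner 𝕜 ((1 / (Real.sqrt r : 𝕜)) • v) ((1 / (Real.sqrt s : 𝕜)) • w) : 𝕜)‖ ^ 2 =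
      ‖(inner 𝕜 v w : 𝕜)‖ ^ 2 / (r * s) := by
  rw [inner_smul_left, inner_smul_right, norm_mul, norm_mul, norm_conj, one_div, one_div,
    norm_inv, norm_inv, norm_ofReal, norm_ofReal, abs_of_nonneg (Real.sqrt_nonneg r),
    abs_of_nonneg (Real.sqrt_nonneg s), mul_pow, mul_pow, inv_pow, inv_pow,
    Real.sq_sqrt hr, Real.sq_sqrt hs]
  field_simp

theorem inner_e_e (p q : Fin 3 × Fin 3) :
    (inner ℂ (e p) (e q) : ℂ) = if p = q then 1 else 0 := by
  simp [e, EuclideanSpace.inner_single_left]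

theorem inner_unnormalized_psi0_psit0 :
    (inner ℂ (e (0, 0) + e (1, 2)) (e (0, 0) + e (0, 1) + (2 : ℂ) • e (1, 2)) : ℂ) = 3 := by
  simp only [inner_add_left, inner_add_right, inner_smul_right, inner_e_e]
  norm_num

/-- The squared overlap between the honest state `ψ₀` and Alice's cheating state `ψ̃₀`
is `3/4`; this is the probability that Bob's projective measurement onto `ψ₀` accepts
when Alice prepared `ψ̃₀` instead of `ψ₀`. -/
theorem overlap_psi0_psit0 : ‖(inner ℂ ψ₀ ψt₀ : ℂ)‖ ^ 2 = 3 / 4 := by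
  -- not `rw`: the definitions coerce by `Complex.ofReal`, the lemma by `RCLike.ofReal` (defeq only)
  refine (norm_inner_one_div_sqrt_smul_sq (𝕜 := ℂ) (r := 2) (s := 6) (by norm_num) (by norm_num)
    _ _).trans ?_
  rw [inner_unnormalized_psi0_psit0]
  norm_num
end
end

section
/- Naimark dilation of finite POVMs by a pure ancilla: let E : Fin m → M_n(ℂ) be a family of positive semidefinite matrices with Σ_x E x = 1. Then there exist d ≥ 1, a unit vector φ : Fin d → ℂ, and a family F : Fin m → M_{n·d}(ℂ) of Hermitian idempotent matrices (F x * F x = F x and (F x)ᴴ = F x) with Σ_x F x = 1, such that for every ρ ∈ M_n(ℂ): trace(E x * ρ) = trace(F x * (ρ ⊗ₖ Φ)) for all x, where Φ ∈ M_d(ℂ) is the matrix Φ a b = φ a · conj(φ b) and ⊗ₖ denotes the Kronecker product (so M_{n·d}(ℂ) is indexed by Fin n × Fin d). -/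
/-!
Write `E x = (R x)ᴴ * R x`. Stacking the blocks `R x` gives an isometry `V : ℂⁿ → ℂⁿ ⊗ ℂᵐ`
(because `∑ x, E x = 1`), while `ρ ↦ ρ ⊗ |φ⟩⟨φ|` is conjugation by the isometry `W = 1 ⊗ φ`.
Extending the isometry `V W⁻¹` from the range of `W` gives a unitary `U` with `U W = V`, and the
projections `F x = Uᴴ (1 ⊗ |x⟩⟨x|) U` then satisfy
`tr (F x (ρ ⊗ |φ⟩⟨φ|)) = tr (Vᴴ (1 ⊗ |x⟩⟨x|) V ρ) = tr (E x ρ)`.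
-/

open Matrix
open scoped ComplexOrder Kronecker InnerProductSpace

theorem LinearIsometry.exists_comp_eq {𝕜 F V : Type*} [RCLike 𝕜] [NormedAddCommGroup F]
    [InnerProductSpace 𝕜 F] [NormedAddCommGroup V] [InnerProductSpace 𝕜 V]
    [FiniteDimensional 𝕜 V] (w v : F →ₗᵢ[𝕜] V) : ∃ u : V →ₗᵢ[𝕜] V, u.comp w = v := by
  let L := v.comp w.equivRange.symm.toLinearIsometry
  refine ⟨L.extend, LinearIsometry.ext fun x => ?_⟩
  simpa [L] using L.extend_apply (w.equivRange x)

namespace Matrix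

section Isometry

variable {𝕜 m n : Type*} [RCLike 𝕜] [Fintype m] [Fintype n] [DecidableEq m] [DecidableEq n]

theorem conjTranspose_mul_self_eq_one_iff {A : Matrix m n 𝕜} :
    Aᴴ * A = 1 ↔ ∀ x, ‖toEuclideanLin A x‖ = ‖x‖ := by
  have inner_eq (x y : EuclideanSpace 𝕜 n) :
      ⟪toEuclideanLin A x, toEuclideanLin A y⟫_𝕜 = ⟪x, toEuclideanLin (Aᴴ * A) y⟫_𝕜 := by
    rw [toLpLin_mul_same, toEuclideanLin_conjTranspose_eq_adjoint, LinearMap.comp_apply,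
      LinearMap.adjoint_inner_right]
  simp_rw [LinearMap.norm_map_iff_inner_map_map, inner_eq]
  refine ⟨fun h => by simp [h], fun h => toEuclideanLin.injective ?_⟩
  ext1 y
  exact ext_inner_left 𝕜 fun x => (h x y).trans (by simp)

theorem exists_mem_unitaryGroup_mul_eq {W V : Matrix m n 𝕜} (hW : Wᴴ * W = 1)
    (hV : Vᴴ * V = 1) : ∃ U ∈ unitaryGroup m 𝕜, U * W = V := by
  let isometry (A : Matrix m n 𝕜) (hA : Aᴴ * A = 1) :
      EuclideanSpace 𝕜 n →ₗᵢ[𝕜] EuclideanSpace 𝕜 m :=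
    ⟨toEuclideanLin A, conjTranspose_mul_self_eq_one_iff.mp hA⟩
  obtain ⟨u, hu⟩ := LinearIsometry.exists_comp_eq (isometry W hW) (isometry V hV)
  refine ⟨toEuclideanLin.symm u.toLinearMap, ?_, toEuclideanLin.injective ?_⟩
  · rw [mem_unitaryGroup_iff', star_eq_conjTranspose, conjTranspose_mul_self_eq_one_iff]
    simp
  · rw [toLpLin_mul_same, LinearEquiv.apply_symm_apply]
    exact congr(LinearIsometry.toLinearMap $hu)

end Isometry

section BlockColumn

variable {α m n p κ : Type*} [CommSemiring α]

/-- The block index comes second, so that rows are indexed like those of `B ⊗ₖ C` for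
`B : Matrix n n α` and `C : Matrix κ κ α`. -/
def blockColumn (A : κ → Matrix n m α) : Matrix (n × κ) m α :=
  of fun i j => A i.2 i.1 j

theorem conjTranspose_blockColumn_mul_blockColumn [StarRing α] [Fintype n] [Fintype κ]
    (A : κ → Matrix n m α) (B : κ → Matrix n p α) :
    (blockColumn A)ᴴ * blockColumn B = ∑ x, (A x)ᴴ * B x := by
  ext j k
  simp only [blockColumn, mul_apply, conjTranspose_apply, of_apply, Fintype.sum_prod_type,
    sum_apply]
  exact Finset.sum_comm

theorem one_kronecker_single_mul_blockColumn [Fintype n] [DecidableEq n] [Fintype κ]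
    [DecidableEq κ] (x : κ) (A : κ → Matrix n m α) :
    ((1 : Matrix n n α) ⊗ₖ single x x 1) * blockColumn A = blockColumn (Pi.single x (A x)) := by
  ext ⟨i, y⟩ j
  rcases eq_or_ne y x with rfl | hy
  · simp [blockColumn, mul_apply, Fintype.sum_prod_type, one_apply, single_apply]
  · simp [blockColumn, mul_apply, one_apply, hy, hy.symm]

theorem conjTranspose_blockColumn_mul_one_kronecker_single_mul_blockColumn [StarRing α]
    [Fintype n] [DecidableEq n] [Fintype κ] [DecidableEq κ] (x : κ) (A : κ → Matrix n m α)
    (B : κ → Matrix n p α) :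
    (blockColumn A)ᴴ * ((1 : Matrix n n α) ⊗ₖ single x x 1) * blockColumn B = (A x)ᴴ * B x := by
  rw [Matrix.mul_assoc, one_kronecker_single_mul_blockColumn,
    conjTranspose_blockColumn_mul_blockColumn,
    Finset.sum_eq_single x (fun y _ hy => by simp [hy]) (by simp), Pi.single_eq_same]

theorem blockColumn_smul_one_mul_mul_conjTranspose [StarRing α] [Fintype n] [DecidableEq n]
    (φ : κ → α) (ρ : Matrix n n α) :
    blockColumn (fun a => φ a • (1 : Matrix n n α)) * ρ *
        (blockColumn fun a => φ a • (1 : Matrix n n α))ᴴ =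
      ρ ⊗ₖ vecMulVec φ (star φ) := by
  ext ⟨i, a⟩ ⟨j, b⟩
  simp only [blockColumn, mul_apply, of_apply, conjTranspose_apply, smul_apply, one_apply,
    smul_eq_mul, mul_ite, mul_one, mul_zero, ite_mul, zero_mul, apply_ite star, star_zero,
    Finset.sum_ite_eq, Finset.mem_univ, ↓reduceIte, kroneckerMap_apply, vecMulVec_apply,
    Pi.star_apply]
  ring

theorem isStarProjection_one_kronecker_single [StarRing α] [Fintype n] [DecidableEq n]
    [Fintype κ] [DecidableEq κ] (x : κ) :
    IsStarProjection ((1 : Matrix n n α) ⊗ₖ single x x 1) where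
  isIdempotentElem := by
    rw [IsIdempotentElem, ← mul_kronecker_mul, Matrix.one_mul, single_mul_single_same, one_mul]
  isSelfAdjoint := by
    rw [IsSelfAdjoint, star_eq_conjTranspose, conjTranspose_kronecker, conjTranspose_one,
      conjTranspose_single, star_one]

theorem sum_one_kronecker_single [DecidableEq n] [Fintype κ] [DecidableEq κ] :
    ∑ x : κ, (1 : Matrix n n α) ⊗ₖ single x x 1 = 1 := by
  have := map_sum (kroneckerBilinear (R := α) (1 : Matrix n n α))
    (fun x : κ => single x x (1 : α)) Finset.univ
  simpa [kroneckerBilinear, sum_single_one, one_kronecker_one] using this.symm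

end BlockColumn

theorem trace_conj_mul_conj_eq_of_mul_eq {α m n : Type*} [CommSemiring α] [StarRing α]
    [Fintype m] [Fintype n] {U : Matrix m m α} {W V : Matrix m n α} (h : U * W = V)
    (Q : Matrix m m α) (ρ : Matrix n n α) :
    (Uᴴ * Q * U * (W * ρ * Wᴴ)).trace = (Vᴴ * Q * V * ρ).trace :=
  calc (Uᴴ * Q * U * (W * ρ * Wᴴ)).trace = (Uᴴ * (Q * V * ρ * Wᴴ)).trace := by
        simp only [← h, Matrix.mul_assoc]
    _ = (Q * V * ρ * Wᴴ * Uᴴ).trace := trace_mul_comm _ _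
    _ = (Q * V * ρ * Vᴴ).trace := by rw [Matrix.mul_assoc _ Wᴴ, ← conjTranspose_mul, h]
    _ = (Vᴴ * Q * V * ρ).trace := by rw [trace_mul_comm]; simp only [Matrix.mul_assoc]

end Matrix

theorem Matrix.PosSemidef.exists_isStarProjection_dilation {𝕜 n κ : Type*} [RCLike 𝕜]
    [Fintype n] [DecidableEq n] [Fintype κ] [DecidableEq κ] (E : κ → Matrix n n 𝕜)
    (hpos : ∀ x, (E x).PosSemidef) (hsum : ∑ x, E x = 1) (φ : κ → 𝕜)
    (hφ : ∑ a, ‖φ a‖ ^ 2 = 1) :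
    ∃ F : κ → Matrix (n × κ) (n × κ) 𝕜, (∀ x, IsStarProjection (F x)) ∧ ∑ x, F x = 1 ∧
      ∀ ρ x, (E x * ρ).trace = (F x * (ρ ⊗ₖ vecMulVec φ (star φ))).trace := by
  open scoped MatrixOrder in
  choose R hR using fun x => CStarAlgebra.nonneg_iff_eq_star_mul_self.mp (hpos x).nonneg
  set W := blockColumn fun a => φ a • (1 : Matrix n n 𝕜)
  have hW : Wᴴ * W = 1 := by
    rw [conjTranspose_blockColumn_mul_blockColumn]
    simp only [conjTranspose_smul, conjTranspose_one, smul_mul_smul, Matrix.one_mul,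
      ← Finset.sum_smul, RCLike.star_def, RCLike.conj_mul]
    simp_rw [← RCLike.ofReal_pow, ← RCLike.ofReal_sum, hφ, RCLike.ofReal_one, one_smul]
  have hV : (blockColumn R)ᴴ * blockColumn R = 1 := by
    rw [conjTranspose_blockColumn_mul_blockColumn, ← hsum]
    simp [hR, star_eq_conjTranspose]
  obtain ⟨U, hU, hUW⟩ := exists_mem_unitaryGroup_mul_eq hW hV
  let σ := Unitary.conjStarAlgAut 𝕜 _ (star ⟨U, hU⟩)
  refine ⟨fun x => σ ((1 : Matrix n n 𝕜) ⊗ₖ single x x 1),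
    fun x => (isStarProjection_one_kronecker_single x).map σ,
    by rw [← map_sum, sum_one_kronecker_single, map_one], fun ρ x => ?_⟩
  dsimp only [σ]
  rw [← blockColumn_smul_one_mul_mul_conjTranspose, Unitary.conjStarAlgAut_star_apply]
  dsimp only
  rw [star_eq_conjTranspose, trace_conj_mul_conj_eq_of_mul_eq hUW,
    conjTranspose_blockColumn_mul_one_kronecker_single_mul_blockColumn, hR, star_eq_conjTranspose]

/-- Naimark dilation of finite POVMs by a pure ancilla: every POVM
`E : Fin m → M_n(ℂ)` (positive semidefinite matrices summing to `1`) can be dilated,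
using an ancilla in a pure state `φ`, to a projection-valued measure
`F : Fin m → M_{n·d}(ℂ)` reproducing all outcome probabilities:
`tr(E x · ρ) = tr(F x · (ρ ⊗ |φ⟩⟨φ|))` for every state `ρ`. -/
theorem naimark_dilation_pure_ancilla (n m : ℕ) (E : Fin m → Matrix (Fin n) (Fin n) ℂ)
    (hpos : ∀ x, (E x).PosSemidef) (hsum : ∑ x, E x = 1) :
    ∃ d : ℕ, 1 ≤ d ∧
      ∃ (φ : Fin d → ℂ) (F : Fin m → Matrix (Fin n × Fin d) (Fin n × Fin d) ℂ),
        (∑ a : Fin d, ‖φ a‖ ^ 2 = 1) ∧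
        (∀ x, F x * F x = F x) ∧
        (∀ x, (F x)ᴴ = F x) ∧
        (∑ x, F x = 1) ∧
        ∀ (ρ : Matrix (Fin n) (Fin n) ℂ) (x : Fin m),
          (E x * ρ).trace =
            (F x * (ρ ⊗ₖ Matrix.of (fun a b : Fin d => φ a * (starRingEnd ℂ) (φ b)))).trace := by
  rcases Nat.eq_zero_or_pos m with rfl | hm
  · -- Without outcomes, `∑ x, E x = 1` says `0 = 1`, so every matrix space over `Fin n` is trivial.
    refine ⟨1, le_rfl, 1, finZeroElim, by simp, finZeroElim, finZeroElim, ?_, fun _ => finZeroElim⟩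
    rw [Fin.sum_univ_zero] at hsum ⊢
    rw [← one_kronecker_one, ← hsum, zero_kronecker]
  · have : NeZero m := ⟨hm.ne'⟩
    have hφ : ∑ a, ‖(Pi.single 0 1 : Fin m → ℂ) a‖ ^ 2 = 1 := by
      rw [Fintype.sum_eq_single 0 fun a ha => by simp [ha]]
      simp
    obtain ⟨F, hF, hFsum, htrace⟩ := PosSemidef.exists_isStarProjection_dilation E hpos hsum _ hφ
    exact ⟨m, hm, _, F, hφ, fun x => (hF x).isIdempotentElem, fun x => (hF x).isSelfAdjoint,
      hFsum, htrace⟩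
end
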